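/- Let G be an MCR game such that Val_G(v) ≠ +∞ for every vertex v, and let G' be the mean-payoff game played on the same weighted graph. Then for every vertex v, Val_G(v) = −∞ if and only if Val_{G'}(v) < 0. -/

import Mathlib

open Filter

/-- A two-player turn-based weighted game graph. `owner v = true` means that
vertex `v` belongs to player Max, `owner v = false` that it belongs to player Min.
Every vertex has at least one successor. -/
structure Game (V : Type) where
  owner : V → Bool
  E : V → V → Prop
  nonempty : ∀ v, ∃ v', E v v'
  w : V → V → ℤ

namespace Game

variable {V : Type}

/-- The (reversed) history of the first `k` vertices of `π` (most recent first). -/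
def hist (π : ℕ → V) (k : ℕ) : List V := (List.ofFn fun i : Fin k => π i).reverse

/-- A strategy: given the (reversed) list of previously visited vertices and the current
vertex, it picks a successor of the current vertex. -/
structure Strategy (g : Game V) where
  next : List V → V → V
  valid : ∀ h v, g.E v (next h v)

/-- A memoryless strategy only depends on the current vertex. -/
def Strategy.Memoryless {g : Game V} (s : g.Strategy) : Prop :=
  ∀ h h' v, s.next h v = s.next h' v

/-- A finite-memory strategy is one encoded by a deterministic Moore machine
`⟨M, m0, up, dec⟩`: the choice after a finite play is `dec` applied to the memory state
reached by reading the play (the initial vertex is not read) and to the last vertex. -/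
def Strategy.FiniteMemory {g : Game V} (s : g.Strategy) : Prop :=
  ∃ (M : Type) (_ : Fintype M) (m0 : M) (up : M → V → M) (dec : M → V → V),
    ∀ h v, s.next h v = dec (List.foldl up m0 (((h.reverse ++ [v]).drop 1))) v

variable (g : Game V)

/-- Next vertex chosen by the owner of the current vertex. -/
def step (σ τ : g.Strategy) (h : List V) (v : V) : V :=
  if g.owner v then σ.next h v else τ.next h v

/-- Current vertex and reversed history after `k` steps of the play `Play(v, σ, τ)`. -/
def playAux (σ τ : g.Strategy) (v : V) : ℕ → V × List V
  | 0 => (v, [])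
  | k+1 =>
      let p := playAux σ τ v k
      (g.step σ τ p.2 p.1, p.1 :: p.2)

/-- `Play(v, σ, τ)`: the unique play starting in `v` and conforming to the
strategy `σ` of Max and the strategy `τ` of Min. -/
def play (σ τ : g.Strategy) (v : V) (k : ℕ) : V := (g.playAux σ τ v k).1

/-- An infinite sequence of vertices is a play when consecutive vertices are linked
by edges. -/
def IsPlay (π : ℕ → V) : Prop := ∀ k, g.E (π k) (π (k+1))

/-- A play conforms to a strategy `s` of the player `p` if, whenever the current vertex
belongs to `p`, the next vertex is the one prescribed by `s`. -/
def Conforms (p : Bool) (s : g.Strategy) (π : ℕ → V) : Prop :=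
  ∀ k, g.owner (π k) = p → π (k+1) = s.next (hist π k) (π k)

/-- Total-payoff of the prefix of length `k`: the sum of the first `k` edge weights. -/
def TPfin (π : ℕ → V) (k : ℕ) : ℤ := ∑ i ∈ Finset.range k, g.w (π i) (π (i+1))

/-- Total payoff of an infinite play: `liminf` of the payoffs of its prefixes. -/
noncomputable def TP (π : ℕ → V) : EReal :=
  liminf (fun k => (((g.TPfin π k : ℤ) : ℝ) : EReal)) atTop

/-- Mean payoff of an infinite play. -/
noncomputable def MP (π : ℕ → V) : EReal :=
  liminf (fun k => ((((g.TPfin π k : ℤ) : ℝ) / (k : ℝ)) : EReal)) atTop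

open Classical in
/-- Min-cost reachability payoff with target `t`: total payoff up to the first visit
of `t`, and `+∞` if `t` is never visited. -/
noncomputable def MCR (t : V) (π : ℕ → V) : EReal :=
  if h : ∃ k, π k = t then (((g.TPfin π (Nat.find h) : ℤ) : ℝ) : EReal) else ⊤

open Classical in
/-- `MCR` payoff restricted to reaching the target among the first `i+1` vertices. -/
noncomputable def MCRbd (t : V) (i : ℕ) (π : ℕ → V) : EReal :=
  if ∃ k ≤ i, π k = t then g.MCR t π else ⊤

/-- Value of a strategy `σ` of Max from `v` : `inf_τ P(Play(v, σ, τ))`. -/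
noncomputable def valMax (P : (ℕ → V) → EReal) (v : V) (σ : g.Strategy) : EReal :=
  ⨅ τ : g.Strategy, P (g.play σ τ v)

/-- Value of a strategy `τ` of Min from `v` : `sup_σ P(Play(v, σ, τ))`. -/
noncomputable def valMin (P : (ℕ → V) → EReal) (v : V) (τ : g.Strategy) : EReal :=
  ⨆ σ : g.Strategy, P (g.play σ τ v)

/-- Lower value `Val⁻(v) = sup_σ inf_τ P(Play(v, σ, τ))`. -/
noncomputable def lowerVal (P : (ℕ → V) → EReal) (v : V) : EReal :=
  ⨆ σ : g.Strategy, g.valMax P v σ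

/-- Upper value `Val⁺(v) = inf_τ sup_σ P(Play(v, σ, τ))`. -/
noncomputable def upperVal (P : (ℕ → V) → EReal) (v : V) : EReal :=
  ⨅ τ : g.Strategy, g.valMin P v τ

end Game

/-- A min-cost reachability game: a game together with a target vertex `t` whose only
outgoing edge is a self-loop of weight `0`. -/
structure MCRGame (V : Type) extends Game V where
  t : V
  loop : E t t
  loopOnly : ∀ v, E t v → v = t
  loopZero : w t t = 0

/-- The value of a (determined) MCR game. -/
noncomputable def MCRGame.Val {V : Type} (G : MCRGame V) : V → EReal :=
  fun v => G.toGame.lowerVal (G.toGame.MCR G.t) v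

/-- The `i`-step value `val_i(v) = inf_τ sup_σ MCR_i(Play(v, σ, τ))`. -/
noncomputable def MCRGame.ival {V : Type} (G : MCRGame V) (i : ℕ) : V → EReal :=
  fun v => G.toGame.upperVal (G.toGame.MCRbd G.t i) v

/-!
Compare both games with the energy game on the same graph. Iterating its one-step operator from
`0` gives, for every `i`, the least credit with which Max keeps credit plus accumulated weight
nonnegative during `i` steps. Where these credits stay bounded they stabilise, and the limit is a
progress measure: its positional strategy keeps every prefix sum above a constant, so the mean
payoff is nonnegative and the MCR value is finite. On the set `divergent` where they are unbounded,
Max cannot leave the set and Min loses only a bounded amount of credit by never leaving it, so Min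
can force a loss of `1` within a fixed number `m` of steps, forever: the mean payoff is at most
`-1/m`. Forcing instead a loss of `B` and then reaching the target at cost below a uniform bound
`C` of the (finite) values shows that the MCR value is at most `C - B` for every `B`.
-/

lemma exists_limit_of_forall_extend {α : Type*} (P : ℕ → ℕ → (ℕ → α) → Prop) (p₀ : ℕ → α)
    (h₀ : P 0 0 p₀)
    (hext : ∀ j k p, P j k p → ∃ k' p', P (j + 1) k' p' ∧ k < k' ∧ ∀ i ≤ k, p' i = p i) :
    ∃ π : ℕ → α, ∀ j, ∃ k p, P j k p ∧ j ≤ k ∧ ∀ i ≤ k, π i = p i := by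
  choose! K Q hP hlt hagree using hext
  let x : ℕ → ℕ × (ℕ → α) := fun j =>
    Nat.rec (motive := fun _ => ℕ × (ℕ → α)) (0, p₀) (fun j x => (K j x.1 x.2, Q j x.1 x.2)) j
  have hx : ∀ j, P j (x j).1 (x j).2 := by
    intro j
    induction j with
    | zero => exact h₀
    | succ j ih => exact hP j _ _ ih
  have hxlt : ∀ j, (x j).1 < (x (j + 1)).1 := fun j => hlt j _ _ (hx j)
  have hxk : ∀ j, j ≤ (x j).1 := by
    intro j
    induction j with
    | zero => exact le_rfl
    | succ j ih => exact Nat.succ_le_of_lt (ih.trans_lt (hxlt j))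
  have hxmono : Monotone fun j => (x j).1 := monotone_nat_of_le_succ fun j => (hxlt j).le
  have hxagree : ∀ j j', j ≤ j' → ∀ i ≤ (x j).1, (x j').2 i = (x j).2 i := by
    intro j j' h
    induction j', h using Nat.le_induction with
    | base => exact fun _ _ => rfl
    | succ j' hj ih =>
      intro i hi
      rw [← ih i hi]
      exact hagree j' _ _ (hx j') i (hi.trans (hxmono hj))
  refine ⟨fun n => (x n).2 n, fun j => ⟨(x j).1, (x j).2, hx j, hxk j, fun i hi => ?_⟩⟩
  rcases le_total i j with h | h
  · exact (hxagree i j h i (hxk i)).symm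
  · exact hxagree j i h i hi

namespace Game

variable {V : Type}

section Plays

lemma hist_length (π : ℕ → V) (k : ℕ) : (hist π k).length = k := by
  simp [hist]

lemma hist_zero (π : ℕ → V) : hist π 0 = [] := by
  simp [hist]

lemma hist_succ (π : ℕ → V) (k : ℕ) : hist π (k + 1) = π k :: hist π k := by
  simp only [hist, List.ofFn_succ', List.concat_eq_append, List.reverse_append]
  rfl

lemma hist_congr {π π' : ℕ → V} {k : ℕ} (h : ∀ i < k, π i = π' i) :
    hist π k = hist π' k := by
  simp only [hist, List.ofFn_inj.2 (funext fun i : Fin k => h i i.isLt)]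

lemma hist_add (π : ℕ → V) (k l : ℕ) :
    hist π (k + l) = hist (fun i => π (k + i)) l ++ hist π k := by
  simp [hist, List.ofFn_add]

variable (g : Game V)

lemma TPfin_zero (π : ℕ → V) : g.TPfin π 0 = 0 := by
  simp [TPfin]

lemma TPfin_succ (π : ℕ → V) (k : ℕ) :
    g.TPfin π (k + 1) = g.TPfin π k + g.w (π k) (π (k + 1)) :=
  Finset.sum_range_succ _ _

lemma TPfin_add (π : ℕ → V) (k l : ℕ) :
    g.TPfin π (k + l) = g.TPfin π k + g.TPfin (fun i => π (k + i)) l := by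
  simp only [TPfin, Finset.sum_range_add, add_assoc]

lemma TPfin_congr {π π' : ℕ → V} {k : ℕ} (h : ∀ i ≤ k, π i = π' i) :
    g.TPfin π k = g.TPfin π' k :=
  Finset.sum_congr rfl fun i hi => by
    rw [Finset.mem_range] at hi
    rw [h i hi.le, h (i + 1) hi]

lemma play_succ (σ τ : g.Strategy) (v : V) (k : ℕ) :
    g.play σ τ v (k + 1) = g.step σ τ (hist (g.play σ τ v) k) (g.play σ τ v k) := by
  have hsnd : ∀ k, (g.playAux σ τ v k).2 = hist (g.play σ τ v) k := by
    intro k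
    induction k with
    | zero => rfl
    | succ k ih => rw [hist_succ, ← ih]; rfl
  rw [← hsnd]; rfl

def FollowsUpTo (σ : g.Strategy) (p : ℕ → V) (k : ℕ) : Prop :=
  ∀ j < k, g.E (p j) (p (j + 1)) ∧ (g.owner (p j) = true → p (j + 1) = σ.next (hist p j) (p j))

variable {g}

lemma FollowsUpTo.mono {σ : g.Strategy} {p : ℕ → V} {k l : ℕ} (h : g.FollowsUpTo σ p k)
    (hl : l ≤ k) : g.FollowsUpTo σ p l :=
  fun j hj => h j (by omega)

lemma followsUpTo_congr {σ : g.Strategy} {p p' : ℕ → V} {k : ℕ} (h : ∀ i ≤ k, p i = p' i) :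
    g.FollowsUpTo σ p k ↔ g.FollowsUpTo σ p' k := by
  refine forall₂_congr fun j hj => ?_
  rw [h j (by omega), h (j + 1) (by omega), hist_congr fun i hi => h i (by omega)]

lemma FollowsUpTo.isPlay {σ : g.Strategy} {π : ℕ → V} (h : ∀ k, g.FollowsUpTo σ π k) :
    g.IsPlay π :=
  fun k => (h (k + 1) k k.lt_succ_self).1

variable (g)

lemma play_followsUpTo (σ τ : g.Strategy) (v : V) (k : ℕ) :
    g.FollowsUpTo σ (g.play σ τ v) k := by
  intro j _
  rw [play_succ, step]
  refine ⟨?_, fun h => if_pos h⟩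
  split
  · exact σ.valid _ _
  · exact τ.valid _ _

def Strategy.shift {g : Game V} (σ : g.Strategy) (H : List V) : g.Strategy :=
  ⟨fun h u => σ.next (h ++ H) u, fun _ u => σ.valid _ u⟩

def splice (p : ℕ → V) (k : ℕ) (q : ℕ → V) (n : ℕ) : V :=
  if n < k then p n else q (n - k)

section Splice

variable {g} {p q : ℕ → V} {k : ℕ}

lemma splice_add (i : ℕ) : splice p k q (k + i) = q i := by
  simp [splice]

lemma splice_of_le (hq : q 0 = p k) {n : ℕ} (hn : n ≤ k) : splice p k q n = p n := by
  rcases hn.lt_or_eq with hn | rfl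
  · simp [splice, hn]
  · simpa [splice] using hq

lemma hist_splice (i : ℕ) : hist (splice p k q) (k + i) = hist q i ++ hist p k := by
  rw [hist_add]
  congr 1
  · exact hist_congr fun j _ => splice_add j
  · exact hist_congr fun j hj => if_pos hj

lemma TPfin_splice (hq : q 0 = p k) (l : ℕ) :
    g.TPfin (splice p k q) (k + l) = g.TPfin p k + g.TPfin q l := by
  rw [TPfin_add, TPfin_congr g fun i hi => splice_of_le hq hi]
  simp only [splice_add]

lemma followsUpTo_splice {σ : g.Strategy} (hq : q 0 = p k) {l : ℕ}
    (hp : g.FollowsUpTo σ p k) (hq' : g.FollowsUpTo (σ.shift (hist p k)) q l) :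
    g.FollowsUpTo σ (splice p k q) (k + l) := by
  intro j hj
  rcases Nat.lt_or_ge j k with hjk | hjk
  · rw [splice_of_le hq hjk.le, splice_of_le hq hjk,
      hist_congr fun i hi => splice_of_le hq (by omega)]
    exact hp j hjk
  · obtain ⟨i, rfl⟩ := Nat.exists_eq_add_of_le hjk
    rw [add_assoc, splice_add, splice_add, hist_splice]
    exact hq' i (by omega)

end Splice

open Classical in
noncomputable def follow (π : ℕ → V) : g.Strategy where
  next h u :=
    if h = hist π h.length ∧ u = π h.length ∧ g.E u (π (h.length + 1)) then π (h.length + 1)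
    else (g.nonempty u).choose
  valid h u := by
    split_ifs with hc
    · exact hc.2.1 ▸ hc.2.2
    · exact (g.nonempty u).choose_spec

lemma play_follow {σ : g.Strategy} {π : ℕ → V} (hπ : ∀ k, g.FollowsUpTo σ π k) :
    g.play σ (g.follow π) (π 0) = π := by
  funext k
  induction k using Nat.strong_induction_on with
  | _ k ih =>
    cases k with
    | zero => rfl
    | succ k =>
      obtain ⟨he, hσ⟩ := hπ (k + 1) k k.lt_succ_self
      rw [play_succ, hist_congr fun i hi => ih i (by omega), ih k k.lt_succ_self, step]
      split_ifs with hown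
      · exact (hσ hown).symm
      · simp [follow, hist_length, he]

end Plays

section Payoffs

variable (g : Game V)

section Values

variable {P : (ℕ → V) → EReal} {v : V}

lemma lowerVal_le_of_forall_exists {c : EReal} (h : ∀ σ, ∃ τ, P (g.play σ τ v) ≤ c) :
    g.lowerVal P v ≤ c :=
  iSup_le fun σ => let ⟨τ, hτ⟩ := h σ; (iInf_le _ τ).trans hτ

lemma le_lowerVal_of_forall {c : EReal} (σ : g.Strategy) (h : ∀ τ, c ≤ P (g.play σ τ v)) :
    c ≤ g.lowerVal P v :=
  (le_iInf h).trans (le_iSup (g.valMax P v) σ)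

end Values

lemma MP_le_of_frequently {π : ℕ → V} {c : ℝ}
    (h : ∃ᶠ k in atTop, (g.TPfin π k : ℝ) / k ≤ c) : g.MP π ≤ c :=
  liminf_le_of_frequently_le (h.mono fun _ hk => EReal.coe_le_coe_iff.2 hk)

lemma MP_nonneg_of_le_TPfin {π : ℕ → V} {B : ℤ} (h : ∀ k, B ≤ g.TPfin π k) : 0 ≤ g.MP π := by
  have hlim : Tendsto (fun k : ℕ => ((B / k : ℝ) : EReal)) atTop (nhds 0) := by
    simpa using EReal.tendsto_coe.2 (tendsto_const_div_atTop_nhds_zero_nat (B : ℝ))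
  rw [← hlim.liminf_eq]
  exact liminf_le_liminf (Eventually.of_forall fun k => EReal.coe_le_coe_iff.2
    (div_le_div_of_nonneg_right (Int.cast_le.2 (h k)) k.cast_nonneg))

lemma exists_eq_of_MCR_lt_top {t : V} {π : ℕ → V} (h : g.MCR t π < ⊤) : ∃ n, π n = t := by
  by_contra hno
  rw [MCR, dif_neg hno] at h
  exact lt_irrefl _ h

lemma le_MCR_of_le_TPfin {t : V} {π : ℕ → V} {B : ℤ} (h : ∀ k, B ≤ g.TPfin π k) :
    ((B : ℝ) : EReal) ≤ g.MCR t π := by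
  unfold MCR
  split
  · exact EReal.coe_le_coe_iff.2 (Int.cast_le.2 (h _))
  · exact le_top

structure IsProgressMeasure (A : Set V) (F : V → ℕ) : Prop where
  max_step : ∀ u ∈ A, g.owner u = true →
    ∃ u', g.E u u' ∧ u' ∈ A ∧ (F u' : ℤ) ≤ F u + g.w u u'
  min_step : ∀ u ∈ A, g.owner u = false →
    ∀ u', g.E u u' → u' ∈ A ∧ (F u' : ℤ) ≤ F u + g.w u u'

lemma IsProgressMeasure.exists_strategy {A : Set V} {F : V → ℕ} (hF : g.IsProgressMeasure A F) :
    ∃ σ : g.Strategy, ∀ v ∈ A, ∀ τ k, -(F v : ℤ) ≤ g.TPfin (g.play σ τ v) k := by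
  classical
  choose f hf using hF.max_step
  let σ : g.Strategy :=
    ⟨fun _ u => if h : u ∈ A ∧ g.owner u = true then f u h.1 h.2 else (g.nonempty u).choose,
     fun _ u => by
      split_ifs with h
      exacts [(hf u h.1 h.2).1, (g.nonempty u).choose_spec]⟩
  have hnext : ∀ h u (hu : u ∈ A) (ho : g.owner u = true), σ.next h u = f u hu ho :=
    fun _ _ hu ho => dif_pos ⟨hu, ho⟩
  refine ⟨σ, fun v hv τ k => ?_⟩
  have inv : ∀ k, g.play σ τ v k ∈ A ∧
      (F (g.play σ τ v k) : ℤ) ≤ F v + g.TPfin (g.play σ τ v) k := by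
    intro k
    induction k with
    | zero => exact ⟨hv, by simp [play, playAux, TPfin_zero]⟩
    | succ k ih =>
      obtain ⟨hA, hle⟩ := ih
      obtain ⟨he, hσ⟩ := g.play_followsUpTo σ τ v (k + 1) k k.lt_succ_self
      have hstep : g.play σ τ v (k + 1) ∈ A ∧ (F (g.play σ τ v (k + 1)) : ℤ) ≤
          F (g.play σ τ v k) + g.w (g.play σ τ v k) (g.play σ τ v (k + 1)) := by
        cases hown : g.owner (g.play σ τ v k)
        · exact hF.min_step _ hA hown _ he
        · rw [hσ hown, hnext _ _ hA hown]
          exact (hf _ hA hown).2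
      rw [TPfin_succ]
      exact ⟨hstep.1, by omega⟩
  have := (inv k).2
  omega

end Payoffs

section Credit

variable [Fintype V] (g : Game V)

open Classical in
noncomputable def succFinset (u : V) : Finset V := Finset.univ.filter (g.E u)

variable {g} in
lemma mem_succFinset {u u' : V} : u' ∈ g.succFinset u ↔ g.E u u' := by
  simp [succFinset]

lemma succFinset_nonempty (u : V) : (g.succFinset u).Nonempty :=
  let ⟨u', h⟩ := g.nonempty u
  ⟨u', mem_succFinset.2 h⟩

open Classical in
/-- The least initial credit with which Max keeps credit plus accumulated weight nonnegative
during `i` steps from `u`, when Min may only move into `T`. -/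
noncomputable def credit (T : Set V) : ℕ → V → ℕ
  | 0, _ => 0
  | i + 1, u =>
    if g.owner u then
      (g.succFinset u).inf' (g.succFinset_nonempty u)
        fun u' => ((credit T i u' : ℤ) - g.w u u').toNat
    else
      ((g.succFinset u).filter (· ∈ T)).sup fun u' => ((credit T i u' : ℤ) - g.w u u').toNat

variable {g} {T : Set V} {i : ℕ} {u u' : V}

lemma credit_zero (T : Set V) (u : V) : g.credit T 0 u = 0 := rfl

lemma credit_succ_le_of_max (ho : g.owner u = true) (he : g.E u u') :
    g.credit T (i + 1) u ≤ ((g.credit T i u' : ℤ) - g.w u u').toNat := by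
  rw [credit, if_pos ho]
  exact Finset.inf'_le _ (mem_succFinset.2 he)

lemma exists_credit_succ_eq_of_max (ho : g.owner u = true) :
    ∃ u', g.E u u' ∧ g.credit T (i + 1) u = ((g.credit T i u' : ℤ) - g.w u u').toNat := by
  rw [credit, if_pos ho]
  obtain ⟨u', hu', h⟩ := Finset.exists_mem_eq_inf' (g.succFinset_nonempty u)
    fun u' => ((g.credit T i u' : ℤ) - g.w u u').toNat
  exact ⟨u', mem_succFinset.1 hu', h⟩

lemma credit_succ_le_iff_of_min (ho : g.owner u = false) {b : ℕ} :
    g.credit T (i + 1) u ≤ b ↔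
      ∀ u', g.E u u' → u' ∈ T → ((g.credit T i u' : ℤ) - g.w u u').toNat ≤ b := by
  rw [credit, if_neg (by simp [ho]), Finset.sup_le_iff]
  simp [mem_succFinset]

variable (g T)

lemma credit_le_credit_succ : ∀ i u, g.credit T i u ≤ g.credit T (i + 1) u
  | 0, _ => Nat.zero_le _
  | i + 1, u => by
    cases ho : g.owner u
    · refine (credit_succ_le_iff_of_min ho).2 fun u' he hu' => ?_
      have h1 := (credit_succ_le_iff_of_min (i := i + 1) ho).1 le_rfl u' he hu'
      have h2 := credit_le_credit_succ i u'
      omega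
    · obtain ⟨u', he, heq⟩ := exists_credit_succ_eq_of_max (T := T) (i := i + 1) ho
      have h1 := credit_succ_le_of_max (T := T) (i := i) ho he
      have h2 := credit_le_credit_succ i u'
      omega

lemma credit_mono (u : V) : Monotone fun i => g.credit T i u :=
  monotone_nat_of_le_succ fun i => g.credit_le_credit_succ T i u

def divergent : Set V := {u | ∀ b : ℕ, ∃ i, b < g.credit Set.univ i u}

lemma exists_natAbs_w_le : ∃ W : ℕ, ∀ u u', (g.w u u').natAbs ≤ W :=
  let ⟨W, hW⟩ := Finite.exists_le fun p : V × V => (g.w p.1 p.2).natAbs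
  ⟨W, fun u u' => hW (u, u')⟩

lemma exists_credit_le_of_notMem_divergent :
    ∃ B : ℕ, ∀ u ∉ g.divergent, ∀ i, g.credit Set.univ i u ≤ B := by
  have h : ∀ u, ∃ b : ℕ, u ∉ g.divergent → ∀ i, g.credit Set.univ i u ≤ b := by
    intro u
    by_cases hu : u ∈ g.divergent
    · exact ⟨0, fun h => absurd hu h⟩
    · simp only [divergent, Set.mem_ofPred_eq, not_forall, not_exists, not_lt] at hu
      obtain ⟨b, hb⟩ := hu
      exact ⟨b, fun _ => hb⟩
  choose b hb using h
  obtain ⟨B, hB⟩ := Finite.exists_le b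
  exact ⟨B, fun u hu i => (hb u hu i).trans (hB u)⟩

variable {g}

lemma mem_divergent_of_max (hu : u ∈ g.divergent) (ho : g.owner u = true) (he : g.E u u') :
    u' ∈ g.divergent := by
  obtain ⟨W, hW⟩ := g.exists_natAbs_w_le
  intro b
  obtain ⟨i, hi⟩ := hu (b + W)
  cases i with
  | zero => simp [credit_zero] at hi
  | succ i =>
    have h1 := credit_succ_le_of_max (T := Set.univ) (i := i) ho he
    have h2 := hW u u'
    exact ⟨i, by omega⟩

/-- Min's moves out of `divergent` lead to vertices of bounded credit. -/
lemma credit_le_credit_divergent_add {B W : ℕ}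
    (hB : ∀ u ∉ g.divergent, ∀ i, g.credit Set.univ i u ≤ B)
    (hW : ∀ u u', (g.w u u').natAbs ≤ W) :
    ∀ i, ∀ u ∈ g.divergent, g.credit Set.univ i u ≤ g.credit g.divergent i u + (B + W)
  | 0, _, _ => by simp [credit_zero]
  | i + 1, u, hu => by
    cases ho : g.owner u
    · refine (credit_succ_le_iff_of_min ho).2 fun u' he _ => ?_
      have h1 := hW u u'
      by_cases hu' : u' ∈ g.divergent
      · have h2 := credit_le_credit_divergent_add hB hW i u' hu'
        have h3 := (credit_succ_le_iff_of_min (T := g.divergent) (i := i) ho).1 le_rfl u' he hu'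
        omega
      · have h2 := hB u' hu' i
        omega
    · obtain ⟨u', he, heq⟩ := exists_credit_succ_eq_of_max (T := g.divergent) (i := i) ho
      have h1 := credit_le_credit_divergent_add hB hW i u' (mem_divergent_of_max hu ho he)
      have h2 := credit_succ_le_of_max (T := Set.univ) (i := i) ho he
      omega

variable (g)

lemma exists_credit_divergent_pos : ∃ m, ∀ u ∈ g.divergent, 0 < g.credit g.divergent m u := by
  obtain ⟨B, hB⟩ := g.exists_credit_le_of_notMem_divergent
  obtain ⟨W, hW⟩ := g.exists_natAbs_w_le
  have h : ∀ u, ∃ i, u ∈ g.divergent → 0 < g.credit g.divergent i u := by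
    intro u
    by_cases hu : u ∈ g.divergent
    · obtain ⟨i, hi⟩ := hu (B + W)
      have := credit_le_credit_divergent_add hB hW i u hu
      exact ⟨i, fun _ => by omega⟩
    · exact ⟨0, fun h => absurd h hu⟩
  choose m hm using h
  obtain ⟨M, hM⟩ := Finite.exists_le m
  exact ⟨M, fun u hu => (hm u hu).trans_le (g.credit_mono _ u (hM u))⟩

/-- The credit at a late enough iteration is a progress measure outside `divergent`. -/
lemma exists_isProgressMeasure : ∃ F, g.IsProgressMeasure g.divergentᶜ F := by
  obtain ⟨B, hB⟩ := g.exists_credit_le_of_notMem_divergent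
  obtain ⟨W, hW⟩ := g.exists_natAbs_w_le
  have hidx : ∀ u, ∃ N, (u ∉ g.divergent → ∀ i, g.credit Set.univ i u ≤ g.credit Set.univ N u)
      ∧ (u ∈ g.divergent → B + W < g.credit Set.univ N u) := by
    intro u
    by_cases hu : u ∈ g.divergent
    · obtain ⟨N, hN⟩ := hu (B + W)
      exact ⟨N, fun h => absurd hu h, fun _ => hN⟩
    · have hbdd : BddAbove (Set.range fun i => g.credit Set.univ i u) :=
        ⟨B, Set.forall_mem_range.2 (hB u hu)⟩
      obtain ⟨N, hN⟩ := Nat.sSup_mem (Set.range_nonempty _) hbdd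
      exact ⟨N, fun _ i => (le_csSup hbdd (Set.mem_range_self i)).trans_eq hN.symm,
        fun h => absurd h hu⟩
  choose N hN using hidx
  obtain ⟨I, hI⟩ := Finite.exists_le N
  have stable : ∀ u ∉ g.divergent, g.credit Set.univ (I + 1) u = g.credit Set.univ I u :=
    fun u hu => le_antisymm (((hN u).1 hu _).trans (g.credit_mono _ u (hI u)))
      (g.credit_mono _ u I.le_succ)
  have large : ∀ u ∈ g.divergent, B + W < g.credit Set.univ I u :=
    fun u hu => ((hN u).2 hu).trans_le (g.credit_mono _ u (hI u))
  refine ⟨fun u => g.credit Set.univ I u, ⟨fun u hu ho => ?_, fun u hu ho u' he => ?_⟩⟩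
  · obtain ⟨u', he, heq⟩ := exists_credit_succ_eq_of_max (T := Set.univ) (i := I) ho
    have h1 := stable u hu
    have h2 := hB u hu (I + 1)
    have h3 := hW u u'
    have hu' : u' ∉ g.divergent := fun h => by have := large u' h; omega
    exact ⟨u', he, hu', by omega⟩
  · have h0 := (credit_succ_le_iff_of_min (T := Set.univ) (i := I) ho).1 le_rfl u' he trivial
    have h1 := stable u hu
    have h2 := hB u hu (I + 1)
    have h3 := hW u u'
    have hu' : u' ∉ g.divergent := fun h => by have := large u' h; omega
    exact ⟨hu', by omega⟩

end Credit

section Divergent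

variable [Fintype V] {g : Game V}

lemma exists_followsUpTo_TPfin_lt {T : Set V}
    (hT : ∀ u ∈ T, g.owner u = true → ∀ u', g.E u u' → u' ∈ T) :
    ∀ (i : ℕ) (σ : g.Strategy) (B : ℤ) (u : V), u ∈ T → B < g.credit T i u →
      ∃ k p, k ≤ i ∧ p 0 = u ∧ p k ∈ T ∧ g.FollowsUpTo σ p k ∧ g.TPfin p k < -B := by
  intro i
  induction i with
  | zero =>
    intro σ B u hu hB
    rw [credit_zero] at hB
    exact ⟨0, fun _ => u, le_rfl, rfl, hu, fun j hj => absurd hj j.not_lt_zero,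
      by rw [TPfin_zero]; omega⟩
  | succ i ih =>
    intro σ B u hu hB
    rcases lt_or_ge B 0 with hB0 | hB0
    · exact ⟨0, fun _ => u, by omega, rfl, hu, fun j hj => absurd hj j.not_lt_zero,
        by rw [TPfin_zero]; omega⟩
    obtain ⟨u', he, hu', hlt, hσ⟩ : ∃ u', g.E u u' ∧ u' ∈ T ∧ B + g.w u u' < g.credit T i u' ∧
        (g.owner u = true → u' = σ.next [] u) := by
      cases ho : g.owner u
      · have hnot : ¬ g.credit T (i + 1) u ≤ B.toNat := by omega
        rw [credit_succ_le_iff_of_min ho] at hnot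
        push Not at hnot
        obtain ⟨u', he, hu', hlt⟩ := hnot
        exact ⟨u', he, hu', by omega, by simp⟩
      · have he := σ.valid [] u
        have := credit_succ_le_of_max (T := T) (i := i) ho he
        exact ⟨_, he, hT u hu ho _ he, by omega, fun _ => rfl⟩
    let first : ℕ → V := fun n => if n = 0 then u else u'
    have hfirst : hist first 1 = [u] := by rw [hist_succ, hist_zero]; rfl
    obtain ⟨k, q, hk, hq0, hqT, hqF, hqTP⟩ := ih (σ.shift [u]) (B + g.w u u') u' hu' hlt
    refine ⟨1 + k, splice first 1 q, by omega, rfl, by rwa [splice_add], ?_, ?_⟩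
    · refine followsUpTo_splice hq0 (fun j hj => ?_) (by rwa [hfirst])
      obtain rfl : j = 0 := by omega
      exact ⟨he, fun ho => by simpa [first, hist_zero] using hσ ho⟩
    · rw [TPfin_splice hq0, show g.TPfin first 1 = g.w u u' by simp [TPfin, first]]
      omega

variable (g)

lemma exists_MP_le_neg_of_mem_divergent {v : V} (hv : v ∈ g.divergent) :
    ∃ c : ℝ, c < 0 ∧ ∀ σ : g.Strategy, ∃ τ, g.MP (g.play σ τ v) ≤ c := by
  obtain ⟨m, hm⟩ := g.exists_credit_divergent_pos
  have hm0 : (0 : ℝ) < m := Nat.cast_pos.2 (Nat.pos_of_ne_zero fun h => by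
    simpa [h, credit_zero] using hm v hv)
  refine ⟨-1 / m, div_neg_of_neg_of_pos (by norm_num) hm0, fun σ => ?_⟩
  -- Min repeats phases of at most `m` steps, each lowering the accumulated weight by `1`.
  let P : ℕ → ℕ → (ℕ → V) → Prop := fun j k p =>
    p 0 = v ∧ p k ∈ g.divergent ∧ g.FollowsUpTo σ p k ∧ g.TPfin p k ≤ -j ∧ k ≤ j * m
  have h₀ : P 0 0 fun _ => v :=
    ⟨rfl, hv, fun j hj => absurd hj j.not_lt_zero, by rw [TPfin_zero]; simp, Nat.zero_le _⟩
  obtain ⟨π, hπ⟩ := exists_limit_of_forall_extend P (fun _ => v) h₀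
      fun j k p ⟨hp0, hpk, hpF, hpTP, hkm⟩ => by
    obtain ⟨l, q, hl, hq0, hqT, hqF, hqTP⟩ := exists_followsUpTo_TPfin_lt
      (fun _ hu ho _ he => mem_divergent_of_max hu ho he) m (σ.shift (hist p k)) 0 (p k) hpk
      (by exact_mod_cast hm _ hpk)
    have hl0 : 0 < l := Nat.pos_of_ne_zero fun h => by simp [h, TPfin_zero] at hqTP
    refine ⟨k + l, splice p k q, ⟨?_, ?_, followsUpTo_splice hq0 hpF hqF, ?_, ?_⟩, by omega,
      fun i hi => splice_of_le hq0 hi⟩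
    · rw [splice_of_le hq0 (Nat.zero_le k), hp0]
    · rwa [splice_add]
    · rw [TPfin_splice hq0]
      push_cast
      omega
    · rw [add_mul, one_mul]
      omega
  have hπF : ∀ K, g.FollowsUpTo σ π K := fun K => by
    obtain ⟨k, p, ⟨-, -, hpF, -⟩, hk, hπp⟩ := hπ K
    exact ((g.followsUpTo_congr hπp).2 hpF).mono hk
  have hπ0 : π 0 = v := by
    obtain ⟨k, p, ⟨hp0, -⟩, -, hπp⟩ := hπ 0
    rw [hπp 0 (Nat.zero_le k), hp0]
  refine ⟨g.follow π, ?_⟩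
  rw [← hπ0, g.play_follow hπF]
  refine g.MP_le_of_frequently (frequently_atTop.2 fun N => ?_)
  obtain ⟨k, p, ⟨-, -, -, hpTP, hkm⟩, hk, hπp⟩ := hπ (N + 1)
  refine ⟨k, by omega, ?_⟩
  have hk0 : (0 : ℝ) < k := by exact_mod_cast (show 0 < k by omega)
  have hTP : (g.TPfin π k : ℝ) ≤ -(N + 1 : ℝ) := by
    rw [g.TPfin_congr hπp]
    exact_mod_cast hpTP
  have hkm' : (k : ℝ) ≤ (N + 1) * m := by exact_mod_cast hkm
  rw [div_le_div_iff₀ hk0 hm0]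
  nlinarith

lemma lowerVal_MP_neg_of_mem_divergent {v : V} (hv : v ∈ g.divergent) :
    g.lowerVal g.MP v < 0 := by
  obtain ⟨c, hc, h⟩ := g.exists_MP_le_neg_of_mem_divergent hv
  exact (g.lowerVal_le_of_forall_exists h).trans_lt (by exact_mod_cast hc)

lemma exists_strategy_le_TPfin_of_notMem_divergent {v : V} (hv : v ∉ g.divergent) :
    ∃ (σ : g.Strategy) (B : ℤ), ∀ τ k, B ≤ g.TPfin (g.play σ τ v) k := by
  obtain ⟨F, hF⟩ := g.exists_isProgressMeasure
  obtain ⟨σ, hσ⟩ := hF.exists_strategy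
  exact ⟨σ, _, hσ v hv⟩

lemma lowerVal_MP_nonneg_of_notMem_divergent {v : V} (hv : v ∉ g.divergent) :
    0 ≤ g.lowerVal g.MP v :=
  let ⟨σ, _, h⟩ := g.exists_strategy_le_TPfin_of_notMem_divergent hv
  g.le_lowerVal_of_forall σ fun τ => g.MP_nonneg_of_le_TPfin (h τ)

end Divergent

end Game

namespace MCRGame

variable {V : Type} (G : MCRGame V)

section Target

variable {π : ℕ → V} {n : ℕ}

lemma eq_t_of_le (hπ : G.IsPlay π) (hn : π n = G.t) {i : ℕ} (hi : n ≤ i) : π i = G.t := by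
  induction i, hi using Nat.le_induction with
  | base => exact hn
  | succ i _ ih => exact G.loopOnly _ (ih ▸ hπ i)

lemma TPfin_eq_of_le (hπ : G.IsPlay π) (hn : π n = G.t) {i : ℕ} (hi : n ≤ i) :
    G.TPfin π i = G.TPfin π n := by
  induction i, hi using Nat.le_induction with
  | base => rfl
  | succ i hni ih =>
    rw [Game.TPfin_succ, ih, G.eq_t_of_le hπ hn hni, G.eq_t_of_le hπ hn (by omega), G.loopZero,
      add_zero]

open Classical in
lemma MCR_eq_of_eq_t (hπ : G.IsPlay π) (hn : π n = G.t) :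
    G.MCR G.t π = ((G.TPfin π n : ℝ) : EReal) := by
  have h : ∃ k, π k = G.t := ⟨n, hn⟩
  rw [Game.MCR, dif_pos h, G.TPfin_eq_of_le hπ (Nat.find_spec h) (Nat.find_min' h hn)]

end Target

variable [Fintype V] {v : V}

lemma val_ne_bot_of_notMem_divergent (hv : v ∉ G.divergent) : G.Val v ≠ ⊥ :=
  let ⟨σ, _, h⟩ := G.exists_strategy_le_TPfin_of_notMem_divergent hv
  ne_bot_of_le_ne_bot (EReal.coe_ne_bot _)
    (G.le_lowerVal_of_forall σ fun τ => G.le_MCR_of_le_TPfin (h τ))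

lemma exists_forall_val_lt (hnotop : ∀ u, G.Val u ≠ ⊤) : ∃ C : ℝ, ∀ u, G.Val u < C := by
  choose c hc using fun u => EReal.lt_iff_exists_real_btwn.1 (lt_top_iff_ne_top.2 (hnotop u))
  obtain ⟨C, hC⟩ := Finite.exists_le c
  exact ⟨C, fun u => (hc u).1.trans_le (EReal.coe_le_coe_iff.2 (hC u))⟩

lemma val_eq_bot_of_mem_divergent (hnotop : ∀ u, G.Val u ≠ ⊤) (hv : v ∈ G.divergent) :
    G.Val v = ⊥ := by
  obtain ⟨C, hC⟩ := G.exists_forall_val_lt hnotop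
  refine (EReal.eq_bot_iff_forall_lt _).2 fun z => ?_
  refine lt_of_le_of_lt (b := ((z - 1 : ℝ) : EReal)) ?_ (EReal.coe_lt_coe_iff.2 (by linarith))
  refine G.lowerVal_le_of_forall_exists fun σ => ?_
  obtain ⟨i, hi⟩ := hv ⌈C - z⌉₊
  obtain ⟨k, p, -, hp0, -, hpF, hpTP⟩ := Game.exists_followsUpTo_TPfin_lt (T := Set.univ)
    (fun _ _ _ _ _ => trivial) i σ ⌈C - z⌉₊ v trivial (by exact_mod_cast hi)
  obtain ⟨τ, hτ⟩ : ∃ τ, G.MCR G.t (G.play (σ.shift (Game.hist p k)) τ (p k)) < C :=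
    iInf_lt_iff.1 ((le_iSup (G.valMax _ (p k)) (σ.shift (Game.hist p k))).trans_lt (hC (p k)))
  set tail := G.play (σ.shift (Game.hist p k)) τ (p k)
  have htail0 : tail 0 = p k := rfl
  obtain ⟨n, hn⟩ := G.exists_eq_of_MCR_lt_top (hτ.trans (EReal.coe_lt_top C))
  rw [G.MCR_eq_of_eq_t (Game.FollowsUpTo.isPlay (G.play_followsUpTo _ τ _)) hn] at hτ
  have hF : ∀ K, G.FollowsUpTo σ (Game.splice p k tail) K := fun K =>
    (Game.followsUpTo_splice htail0 hpF (G.play_followsUpTo _ τ _ K)).mono (by omega)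
  have hsplice0 : Game.splice p k tail 0 = v := (Game.splice_of_le htail0 (Nat.zero_le k)).trans hp0
  refine ⟨G.follow (Game.splice p k tail), ?_⟩
  rw [← hsplice0, G.play_follow hF, G.MCR_eq_of_eq_t (Game.FollowsUpTo.isPlay hF)
    (n := k + n) (by rw [Game.splice_add, hn]), Game.TPfin_splice htail0]
  have h1 : (G.TPfin tail n : ℝ) < C := by exact_mod_cast hτ
  have h2 : (G.TPfin p k : ℝ) + 1 ≤ -⌈C - z⌉₊ := by exact_mod_cast hpTP
  have h3 := Nat.le_ceil (C - z)
  exact EReal.coe_le_coe_iff.2 (by push_cast; linarith)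

end MCRGame

/-- if every vertex of an MCR game `G` has value `≠ +∞`, then a vertex has
value `−∞` in `G` iff it has negative value in the mean-payoff game `G'` played on the
same weighted graph. -/
theorem statement_3 {V : Type} [Fintype V] (G : MCRGame V)
    (hnotop : ∀ v : V, G.Val v ≠ ⊤) (v : V) :
    G.Val v = ⊥ ↔ G.toGame.lowerVal G.toGame.MP v < 0 := by
  by_cases hv : v ∈ G.divergent
  · exact ⟨fun _ => G.lowerVal_MP_neg_of_mem_divergent hv,
      fun _ => G.val_eq_bot_of_mem_divergent hnotop hv⟩
  · exact ⟨fun h => absurd h (G.val_ne_bot_of_notMem_divergent hv),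
      fun h => absurd h (G.lowerVal_MP_nonneg_of_notMem_divergent hv).not_gt⟩
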